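/- arXiv:1509.07482 — 2 statements merged into one kernel-verified Lean document; each statement's English description precedes it below -/
import Mathlib

section
/- For n ≥ 3, the n-ary form p_n(x_1,…,x_n) = 4 Σ_j x_j^4 - 17 Σ_{i<j} x_i^2 x_j^2 is irreducible over ℝ. -/
open MvPolynomial Finset

noncomputable def pn (n : ℕ) : MvPolynomial (Fin n) ℝ :=
  4 * ∑ j, X j ^ 4
    - 17 * ∑ i, ∑ j ∈ univ.filter (fun j => i < j), X i ^ 2 * X j ^ 2

/-
Factors of a homogeneous polynomial are homogeneous, so a factorization of `p_n` into non-units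
is a factorization into homogeneous forms of positive degree; setting `x_4 = ⋯ = x_n = 0` turns it
into one of `p_3`. For `p_3` a linear factor `a x + b y + c z` is impossible: `p_3` vanishes at
`(-b, a, 0)`, `(-c, 0, a)`, `(0, -c, b)`, forcing each of `b²/a²`, `c²/b²`, `a²/c²` into `{4, 1/4}`,
yet their product is `1`. For two quadratic factors, restricting to the planes `x = ±y` and `y = z`
gives factorizations of the binary quartic `-9s⁴ - 34s²u² + 4u⁴`, which kill all mixed terms; the
remaining diagonal forms `(∑ aᵢxᵢ²)(∑ cᵢxᵢ²)` need `aᵢcⱼ < 0` for `i ≠ j` together with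
`(a₁c₂)(a₂c₃)(a₃c₁) = (a₁c₁)(a₂c₂)(a₃c₃) = 64`.
-/

namespace MvPolynomial

variable {σ R : Type*}

theorem homogeneousComponent_mul_of_le_degree [CommSemiring R] {f g : MvPolynomial σ R}
    {a b : ℕ} (hf : ∀ d ∈ f.support, a ≤ d.degree) (hg : ∀ d ∈ g.support, b ≤ d.degree) :
    homogeneousComponent (a + b) (f * g) =
      homogeneousComponent a f * homogeneousComponent b g := by
  classical
  ext d
  rw [coeff_homogeneousComponent, coeff_mul, coeff_mul, ite_sum_zero]
  refine Finset.sum_congr rfl fun x hx => ?_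
  rw [← mem_antidiagonal.mp hx, coeff_homogeneousComponent, coeff_homogeneousComponent, map_add]
  by_cases hx₁ : x.1 ∈ f.support
  · by_cases hx₂ : x.2 ∈ g.support
    · have := hf _ hx₁
      have := hg _ hx₂
      split_ifs <;> first | rfl | omega | simp
    · simp [notMem_support_iff.mp hx₂]
  · simp [notMem_support_iff.mp hx₁]

theorem homogeneousComponent_degree_ne_zero [CommSemiring R] {f : MvPolynomial σ R}
    {u : σ →₀ ℕ} (hu : u ∈ f.support) : homogeneousComponent u.degree f ≠ 0 := by
  intro h
  apply mem_support_iff.mp hu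
  simpa [coeff_homogeneousComponent] using congrArg (coeff u) h

theorem IsHomogeneous.of_mul_left [CommRing R] [IsDomain R] {f g : MvPolynomial σ R} {n : ℕ}
    (hfg : (f * g).IsHomogeneous n) (hg : g ≠ 0) : f.IsHomogeneous f.totalDegree := by
  rcases eq_or_ne f 0 with rfl | hf
  · exact isHomogeneous_zero _ _ _
  obtain ⟨u, hu, hu_min⟩ := f.support.exists_min_image Finsupp.degree (support_nonempty.2 hf)
  obtain ⟨v, hv, hv_min⟩ := g.support.exists_min_image Finsupp.degree (support_nonempty.2 hg)
  -- The lowest components multiply to a nonzero component of `f * g`.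
  have hlow : u.degree + v.degree = n := by
    by_contra hne
    have hcomp := homogeneousComponent_mul_of_le_degree hu_min hv_min
    rw [homogeneousComponent_of_mem hfg, if_neg hne] at hcomp
    exact mul_ne_zero (homogeneousComponent_degree_ne_zero hu)
      (homogeneousComponent_degree_ne_zero hv) hcomp.symm
  have htop : f.totalDegree + g.totalDegree = n := by
    rw [← totalDegree_mul_of_isDomain hf hg, hfg.totalDegree (mul_ne_zero hf hg)]
  have hu_le : u.degree ≤ f.totalDegree := le_totalDegree hu
  have hv_le : v.degree ≤ g.totalDegree := le_totalDegree hv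
  intro d hd
  have hd_ge := hu_min d (mem_support_iff.2 hd)
  have hd_le : d.degree ≤ f.totalDegree := le_totalDegree (mem_support_iff.2 hd)
  rw [Pi.one_def, ← Finsupp.degree_eq_weight_one]
  omega

theorem IsHomogeneous.not_isUnit [CommRing R] [IsReduced R] {f : MvPolynomial σ R} {n : ℕ}
    (hf : f.IsHomogeneous n) (hn : n ≠ 0) (h0 : f ≠ 0) : ¬IsUnit f := fun hu =>
  hn (hf.totalDegree h0 ▸ (isUnit_iff_totalDegree_of_isReduced.mp hu).2)

theorem isUnit_of_totalDegree_eq_zero {K : Type*} [Field K] {f : MvPolynomial σ K} (h0 : f ≠ 0)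
    (hf : f.totalDegree = 0) : IsUnit f := by
  rw [totalDegree_eq_zero_iff_eq_C] at hf
  rw [hf] at h0 ⊢
  exact (isUnit_iff_ne_zero.mpr fun h => h0 (by rw [h, map_zero])).map C

theorem irreducible_of_forall_ne_mul_of_isHomogeneous {K : Type*} [Field K]
    {p : MvPolynomial σ K} {n : ℕ} (hp : p.IsHomogeneous n) (hn : n ≠ 0) (h0 : p ≠ 0)
    (h : ∀ (f g : MvPolynomial σ K) (a b : ℕ), f.IsHomogeneous a → g.IsHomogeneous b →
      a ≠ 0 → b ≠ 0 → p ≠ f * g) :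
    Irreducible p := by
  refine ⟨hp.not_isUnit hn h0, fun f g hfg => ?_⟩
  by_contra! ⟨hf, hg⟩
  have hf0 : f ≠ 0 := by rintro rfl; exact h0 (by simpa using hfg)
  have hg0 : g ≠ 0 := by rintro rfl; exact h0 (by simpa using hfg)
  refine h f g _ _ ((hfg ▸ hp).of_mul_left hg0) ((mul_comm f g ▸ hfg ▸ hp).of_mul_left hf0)
    (fun hd => hf (isUnit_of_totalDegree_eq_zero hf0 hd))
    (fun hd => hg (isUnit_of_totalDegree_eq_zero hg0 hd)) hfg

variable [Fintype σ]

theorem IsHomogeneous.exists_eq_sum_C_mul_X [CommSemiring R] {f : MvPolynomial σ R}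
    (hf : f.IsHomogeneous 1) : ∃ c : σ → R, f = ∑ i, C (c i) * X i := by
  have hmem : f ∈ Submodule.span R (Set.range X) := by
    rw [← homogeneousSubmodule_one_eq_span_X]; exact hf
  obtain ⟨c, hc⟩ := (Submodule.mem_span_range_iff_exists_fun R).mp hmem
  exact ⟨c, by simp_rw [← hc, smul_eq_C_mul]⟩

theorem IsHomogeneous.exists_eq_sum_C_mul_X_mul_X {K : Type*} [Field K] [CharZero K]
    {f : MvPolynomial σ K} (hf : f.IsHomogeneous 2) :
    ∃ c : σ → σ → K, f = ∑ i, ∑ j, C (c i j) * X i * X j := by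
  choose c hc using fun i => (hf.pderiv (i := i)).exists_eq_sum_C_mul_X
  refine ⟨fun i j => c i j / 2, ?_⟩
  -- Euler's identity `∑ Xᵢ ∂ᵢf = 2 f`, with each `∂ᵢf` linear.
  have euler := hf.sum_X_mul_pderiv
  simp_rw [hc, Finset.mul_sum, nsmul_eq_mul, Nat.cast_ofNat] at euler
  apply mul_left_cancel₀ (two_ne_zero' (MvPolynomial σ K))
  rw [← euler, Finset.mul_sum]
  refine Finset.sum_congr rfl fun i _ => ?_
  rw [Finset.mul_sum]
  refine Finset.sum_congr rfl fun j _ => ?_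
  rw [← mul_div_cancel₀ (c i j) two_ne_zero, map_mul, map_ofNat]
  ring

end MvPolynomial

theorem sq_eq_four_mul_sq_or_of_quartic {a b : ℝ}
    (h : 4 * a ^ 4 - 17 * a ^ 2 * b ^ 2 + 4 * b ^ 4 = 0) :
    b ^ 2 = 4 * a ^ 2 ∨ a ^ 2 = 4 * b ^ 2 := by
  have : (b ^ 2 - 4 * a ^ 2) * (a ^ 2 - 4 * b ^ 2) = 0 := by linear_combination -h
  rcases mul_eq_zero.mp this with h | h
  · exact .inl (by linarith)
  · exact .inr (by linarith)

theorem false_of_linear_factor {a b c : ℝ} {G : ℝ → ℝ → ℝ → ℝ}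
    (H : ∀ x y z, (a * x + b * y + c * z) * G x y z
      = 4 * (x ^ 4 + y ^ 4 + z ^ 4) - 17 * (x ^ 2 * y ^ 2 + x ^ 2 * z ^ 2 + y ^ 2 * z ^ 2)) :
    False := by
  have sq_pos_of_mul_eq {r : ℝ} (t : ℝ) (h : r * t = 4) : 0 < r ^ 2 := by
    have : r ≠ 0 := by rintro rfl; simp at h
    positivity
  have ha : 0 < a ^ 2 := sq_pos_of_mul_eq _ (by simpa using H 1 0 0)
  have hb : 0 < b ^ 2 := sq_pos_of_mul_eq _ (by simpa using H 0 1 0)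
  have hc : 0 < c ^ 2 := sq_pos_of_mul_eq _ (by simpa using H 0 0 1)
  have hab := sq_eq_four_mul_sq_or_of_quartic (a := a) (b := b)
    (by linear_combination -H (-b) a 0)
  have hac := sq_eq_four_mul_sq_or_of_quartic (a := a) (b := c)
    (by linear_combination -H (-c) 0 a)
  have hbc := sq_eq_four_mul_sq_or_of_quartic (a := b) (b := c)
    (by linear_combination -H 0 (-c) b)
  rcases hab with hab | hab <;> rcases hac with hac | hac <;> rcases hbc with hbc | hbc <;>
    nlinarith

theorem odd_coeffs_eq_zero_of_mul_eq {A B C D E F : ℝ}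
    (H : ∀ s u : ℝ, (A * s ^ 2 + B * s * u + C * u ^ 2) * (D * s ^ 2 + E * s * u + F * u ^ 2)
      = -9 * s ^ 4 - 34 * s ^ 2 * u ^ 2 + 4 * u ^ 4) : B = 0 ∧ E = 0 := by
  have hAD : A * D = -9 := by linear_combination H 1 0
  have hCF : C * F = 4 := by linear_combination H 0 1
  have h_s3u : A * E + B * D = 0 := by
    linear_combination (2/3) * H 1 1 - (2/3) * H 1 (-1) - (1/12) * H 1 2 + (1/12) * H 1 (-2)
  have h_su3 : B * F + C * E = 0 := by
    linear_combination (1/12) * H 1 2 - (1/12) * H 1 (-2) - (1/6) * H 1 1 + (1/6) * H 1 (-1)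
  -- `(A F) (C D) = (A D) (C F) = -36`, so this linear system in `(B, E)` is nondegenerate.
  have hdet : A * F - C * D ≠ 0 := by
    intro h
    nlinarith [sq_nonneg (A * F), sq_nonneg (C * D)]
  have hB : B * (A * F - C * D) = 0 := by linear_combination A * h_su3 - C * h_s3u
  have hE : E * (A * F - C * D) = 0 := by linear_combination F * h_s3u - D * h_su3
  exact ⟨(mul_eq_zero.mp hB).resolve_right hdet, (mul_eq_zero.mp hE).resolve_right hdet⟩

theorem false_of_diagonal_mul_eq {a₁ a₂ a₃ c₁ c₂ c₃ : ℝ}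
    (h₁ : a₁ * c₁ = 4) (h₂ : a₂ * c₂ = 4) (h₃ : a₃ * c₃ = 4)
    (h₁₂ : a₁ * c₂ + a₂ * c₁ = -17) (h₁₃ : a₁ * c₃ + a₃ * c₁ = -17)
    (h₂₃ : a₂ * c₃ + a₃ * c₂ = -17) : False := by
  have neg {p q : ℝ} (hpq : p * q = 16) (hs : p + q = -17) : p < 0 := by nlinarith
  have n₁ := neg (by linear_combination a₂ * c₂ * h₁ + 4 * h₂ : (a₁ * c₂) * (a₂ * c₁) = 16) h₁₂
  have n₂ := neg (by linear_combination a₃ * c₃ * h₂ + 4 * h₃ : (a₂ * c₃) * (a₃ * c₂) = 16) h₂₃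
  have n₃ := neg (by linear_combination a₁ * c₁ * h₃ + 4 * h₁ : (a₃ * c₁) * (a₁ * c₃) = 16)
    (by linarith)
  have hcyc : (a₁ * c₂) * (a₂ * c₃) * (a₃ * c₁) = 64 := by
    linear_combination a₂ * c₂ * a₃ * c₃ * h₁ + 4 * a₃ * c₃ * h₂ + 16 * h₃
  nlinarith [mul_pos_of_neg_of_neg n₁ n₂]

theorem false_of_quadratic_factorization {a₁ a₂ a₃ a₁₂ a₁₃ a₂₃ c₁ c₂ c₃ c₁₂ c₁₃ c₂₃ : ℝ}
    (H : ∀ x y z,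
      (a₁ * x ^ 2 + a₂ * y ^ 2 + a₃ * z ^ 2 + a₁₂ * x * y + a₁₃ * x * z + a₂₃ * y * z) *
        (c₁ * x ^ 2 + c₂ * y ^ 2 + c₃ * z ^ 2 + c₁₂ * x * y + c₁₃ * x * z + c₂₃ * y * z)
      = 4 * (x ^ 4 + y ^ 4 + z ^ 4) - 17 * (x ^ 2 * y ^ 2 + x ^ 2 * z ^ 2 + y ^ 2 * z ^ 2)) :
    False := by
  obtain ⟨ha_xy, hc_xy⟩ := odd_coeffs_eq_zero_of_mul_eq (A := a₁ + a₂ + a₁₂) (B := a₁₃ + a₂₃)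
    (C := a₃) (D := c₁ + c₂ + c₁₂) (E := c₁₃ + c₂₃) (F := c₃)
    fun s u => by linear_combination H s s u
  obtain ⟨ha_xny, hc_xny⟩ := odd_coeffs_eq_zero_of_mul_eq (A := a₁ + a₂ - a₁₂) (B := a₁₃ - a₂₃)
    (C := a₃) (D := c₁ + c₂ - c₁₂) (E := c₁₃ - c₂₃) (F := c₃)
    fun s u => by linear_combination H s (-s) u
  obtain ⟨ha_yz, hc_yz⟩ := odd_coeffs_eq_zero_of_mul_eq (A := a₂ + a₃ + a₂₃) (B := a₁₂ + a₁₃)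
    (C := a₁) (D := c₂ + c₃ + c₂₃) (E := c₁₂ + c₁₃) (F := c₁)
    fun s u => by linear_combination H u s s
  obtain rfl : a₁₃ = 0 := by linarith
  obtain rfl : a₂₃ = 0 := by linarith
  obtain rfl : a₁₂ = 0 := by linarith
  obtain rfl : c₁₃ = 0 := by linarith
  obtain rfl : c₂₃ = 0 := by linarith
  obtain rfl : c₁₂ = 0 := by linarith
  have h₁ : a₁ * c₁ = 4 := by linear_combination H 1 0 0
  have h₂ : a₂ * c₂ = 4 := by linear_combination H 0 1 0
  have h₃ : a₃ * c₃ = 4 := by linear_combination H 0 0 1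
  exact false_of_diagonal_mul_eq h₁ h₂ h₃ (by linear_combination H 1 1 0 - h₁ - h₂)
    (by linear_combination H 1 0 1 - h₁ - h₃) (by linear_combination H 0 1 1 - h₂ - h₃)

theorem isHomogeneous_pn (n : ℕ) : (pn n).IsHomogeneous 4 := by
  have h4 : (∑ j, X j ^ 4 : MvPolynomial (Fin n) ℝ).IsHomogeneous 4 :=
    .sum _ _ _ fun j _ => isHomogeneous_X_pow j 4
  have h22 : (∑ i, ∑ j ∈ univ.filter (fun j => i < j),
      X i ^ 2 * X j ^ 2 : MvPolynomial (Fin n) ℝ).IsHomogeneous 4 :=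
    .sum _ _ _ fun i _ => .sum _ _ _ fun j _ =>
      (isHomogeneous_X_pow i 2).mul (isHomogeneous_X_pow j 2)
  rw [pn, ← map_ofNat C 4, ← map_ofNat C 17]
  exact (h4.C_mul 4).sub (h22.C_mul 17)

theorem aeval_append_pn (m k : ℕ) :
    aeval (Fin.append X 0 : Fin (m + k) → MvPolynomial (Fin m) ℝ) (pn (m + k)) = pn m := by
  simp only [pn, map_sub, map_mul, map_sum, map_pow, aeval_X, map_ofNat]
  simp [Fin.sum_univ_add, Finset.sum_filter, (Fin.strictMono_castAdd k).lt_iff_lt]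

theorem eval_pn_three (x y z : ℝ) : eval ![x, y, z] (pn 3)
    = 4 * (x ^ 4 + y ^ 4 + z ^ 4) - 17 * (x ^ 2 * y ^ 2 + x ^ 2 * z ^ 2 + y ^ 2 * z ^ 2) := by
  simp [pn, Finset.sum_filter, Fin.sum_univ_three]

theorem pn_three_ne_zero : pn 3 ≠ 0 := fun h => by
  simpa [h] using eval_pn_three 1 0 0

theorem pn_three_ne_mul_of_isHomogeneous_one {f g : MvPolynomial (Fin 3) ℝ}
    (hf : f.IsHomogeneous 1) : pn 3 ≠ f * g := by
  intro h
  obtain ⟨c, rfl⟩ := hf.exists_eq_sum_C_mul_X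
  refine false_of_linear_factor (a := c 0) (b := c 1) (c := c 2)
    (G := fun x y z => eval ![x, y, z] g) fun x y z => ?_
  rw [← eval_pn_three, h]
  simp [Fin.sum_univ_three]

theorem pn_three_ne_mul_of_isHomogeneous_two {f g : MvPolynomial (Fin 3) ℝ}
    (hf : f.IsHomogeneous 2) (hg : g.IsHomogeneous 2) : pn 3 ≠ f * g := by
  intro h
  obtain ⟨a, rfl⟩ := hf.exists_eq_sum_C_mul_X_mul_X
  obtain ⟨c, rfl⟩ := hg.exists_eq_sum_C_mul_X_mul_X
  refine false_of_quadratic_factorization (a₁ := a 0 0) (a₂ := a 1 1) (a₃ := a 2 2)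
    (a₁₂ := a 0 1 + a 1 0) (a₁₃ := a 0 2 + a 2 0) (a₂₃ := a 1 2 + a 2 1)
    (c₁ := c 0 0) (c₂ := c 1 1) (c₃ := c 2 2)
    (c₁₂ := c 0 1 + c 1 0) (c₁₃ := c 0 2 + c 2 0) (c₂₃ := c 1 2 + c 2 1) fun x y z => ?_
  rw [← eval_pn_three, h]
  simp [Fin.sum_univ_three]
  ring

theorem pn_three_ne_mul {f g : MvPolynomial (Fin 3) ℝ} {a b : ℕ} (hf : f.IsHomogeneous a)
    (hg : g.IsHomogeneous b) (ha : a ≠ 0) (hb : b ≠ 0) : pn 3 ≠ f * g := by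
  intro h
  have hab : a + b = 4 := (hf.mul hg).inj_right (h ▸ isHomogeneous_pn 3) (h ▸ pn_three_ne_zero)
  obtain rfl | ⟨rfl, rfl⟩ | rfl : a = 1 ∨ (a = 2 ∧ b = 2) ∨ b = 1 := by omega
  · exact pn_three_ne_mul_of_isHomogeneous_one hf h
  · exact pn_three_ne_mul_of_isHomogeneous_two hf hg h
  · exact pn_three_ne_mul_of_isHomogeneous_one hg (h.trans (mul_comm f g))

theorem pn_irreducible (n : ℕ) (hn : 3 ≤ n) : Irreducible (pn n) := by
  obtain ⟨k, rfl⟩ := Nat.exists_eq_add_of_le hn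
  set φ : Fin (3 + k) → MvPolynomial (Fin 3) ℝ := Fin.append X 0
  have hφ : ∀ i, (φ i).IsHomogeneous 1 :=
    Fin.addCases (by simp [φ, isHomogeneous_X]) (by simp [φ, isHomogeneous_zero])
  have h0 : pn (3 + k) ≠ 0 := fun h => pn_three_ne_zero (by rw [← aeval_append_pn, h, map_zero])
  refine irreducible_of_forall_ne_mul_of_isHomogeneous (isHomogeneous_pn _) four_ne_zero h0
    fun f g a b hf hg ha hb hfg => ?_
  refine pn_three_ne_mul (hf.aeval φ hφ) (hg.aeval φ hφ) (by simpa using ha) (by simpa using hb) ?_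
  rw [← map_mul, ← hfg, aeval_append_pn]
end

section
/- For n ≥ 4, the even symmetric n-ary octic form T_n = M_2 (M_2^3 - 5 M_2 M_4 + 6 M_6) is positive semidefinite but not a sum of squares of forms. -/
open MvPolynomial Finset

noncomputable def M (n r : ℕ) : MvPolynomial (Fin n) ℝ := ∑ j, X j ^ r

def IsSosForms {n : ℕ} (f : MvPolynomial (Fin n) ℝ) : Prop :=
  ∃ (k : ℕ) (h : Fin k → MvPolynomial (Fin n) ℝ),
    (∀ i, ∃ d, (h i).IsHomogeneous d) ∧ f = ∑ i, h i ^ 2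

/-!
Put `y i = x i ^ 2` and `S = ∑ y i`. Then `T = S * ∑ y i (S - 2 y i) (S - 3 y i)`, and the sum is
nonnegative for `y ≥ 0`: at most two `y i` exceed `3S/10`; if two do, merging the others into
their sum only lowers the sum, which leaves three variables, where it is twice Schur's
expression; otherwise every other term is at least `y i S² / 25`, which pays for the one term
that may be negative.

At a vector whose entries lie in `{0, 1, -1}` one has `M₂ = M₄ = M₆ = k`, the number of nonzero
entries, so `T = k² (k - 2) (k - 3)` vanishes when `k = 2` or `k = 3`. If `T = ∑ hᵢ²`, every
`hᵢ` vanishes at these points. For a quartic form in four variables the value at `e₀` is a fixed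
linear combination of its values at these points, so every quartic `hᵢ` vanishes at `e₀`. But
`T (t e₀) = 2 t⁸`, and the coefficient of `t⁸` in `∑ hᵢ (t e₀)² = ∑ hᵢ(e₀)² t^(2 deg hᵢ)` comes
from the quartic `hᵢ` alone.
-/

theorem schur_inequality_of_le {x y z : ℝ} (hz : 0 ≤ z) (hzy : z ≤ y) (hyx : y ≤ x) :
    0 ≤ x * (x - y) * (x - z) + y * (y - x) * (y - z) + z * (z - x) * (z - y) := by
  nlinarith [mul_nonneg (sq_nonneg (x - y)) (by linarith : (0:ℝ) ≤ x + y - z),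
    mul_nonneg (mul_nonneg hz (sub_nonneg.2 (hzy.trans hyx))) (sub_nonneg.2 hzy)]

theorem schur_inequality {x y z : ℝ} (hx : 0 ≤ x) (hy : 0 ≤ y) (hz : 0 ≤ z) :
    0 ≤ x * (x - y) * (x - z) + y * (y - x) * (y - z) + z * (z - x) * (z - y) := by
  rcases le_total x y with h1 | h1 <;> rcases le_total y z with h2 | h2 <;>
    rcases le_total x z with h3 | h3
  all_goals first
    | linarith [schur_inequality_of_le hx h1 h2] | linarith [schur_inequality_of_le hx h3 h2]
    | linarith [schur_inequality_of_le hy h1 h3] | linarith [schur_inequality_of_le hy h2 h3]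
    | linarith [schur_inequality_of_le hz h2 h1] | linarith [schur_inequality_of_le hz h3 h1]

theorem Finset.sum_mul_le_sum_mul_of_le {ι R : Type*} [Semiring R] [PartialOrder R]
    [IsOrderedRing R] {s : Finset ι} {y g : ι → R} {c : R} (hy : ∀ i ∈ s, 0 ≤ y i)
    (hc : ∀ i ∈ s, c ≤ g i) : (∑ i ∈ s, y i) * c ≤ ∑ i ∈ s, y i * g i := by
  rw [sum_mul]
  exact sum_le_sum fun i hi => mul_le_mul_of_nonneg_left (hc i hi) (hy i hi)

theorem sum_mul_sub_mul_sub_nonneg {ι : Type*} [Fintype ι] (y : ι → ℝ) (hy : ∀ i, 0 ≤ y i) :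
    0 ≤ ∑ i, y i * ((∑ j, y j - 2 * y i) * (∑ j, y j - 3 * y i)) := by
  classical
  set S := ∑ j, y j
  have hS : 0 ≤ S := sum_nonneg fun i _ => hy i
  have hsmall {i : ι} (hi : 10 * y i ≤ 3 * S) : S ^ 2 / 25 ≤ (S - 2 * y i) * (S - 3 * y i) := by
    nlinarith [mul_nonneg (by linarith : 0 ≤ 3 * S - 10 * y i)
      (by linarith : (0:ℝ) ≤ 8 * S - 15 * y i)]
  by_cases htwo : ∃ a b, a ≠ b ∧ 3 * S < 10 * y a ∧ 3 * S < 10 * y b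
  · obtain ⟨a, b, hab, ha, hb⟩ := htwo
    set t := (univ.erase a).erase b
    have hsplit (f : ι → ℝ) : ∑ i, f i = f a + f b + ∑ i ∈ t, f i := by
      rw [← add_sum_erase _ f (mem_univ a), ← add_sum_erase _ f (mem_erase.2 ⟨hab.symm, mem_univ b⟩),
        add_assoc]
    set R := ∑ i ∈ t, y i
    have hR : 0 ≤ R := sum_nonneg fun i _ => hy i
    have hSR : S = y a + y b + R := hsplit y
    have hmerge : R * ((S - 2 * R) * (S - 3 * R)) ≤
        ∑ i ∈ t, y i * ((S - 2 * y i) * (S - 3 * y i)) := by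
      refine sum_mul_le_sum_mul_of_le (fun i _ => hy i) fun i hi => ?_
      have hiR : y i ≤ R := single_le_sum (fun j _ => hy j) hi
      nlinarith [mul_nonneg (sub_nonneg.2 hiR) (by linarith : 0 ≤ 5 * S - 6 * y i - 6 * R)]
    have hschur : y a * ((S - 2 * y a) * (S - 3 * y a)) + y b * ((S - 2 * y b) * (S - 3 * y b))
        + R * ((S - 2 * R) * (S - 3 * R)) = 2 * (y a * (y a - y b) * (y a - R)
          + y b * (y b - y a) * (y b - R) + R * (R - y a) * (R - y b)) := by
      rw [hSR]; ring
    rw [hsplit]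
    linarith [schur_inequality (hy a) (hy b) hR]
  by_cases hone : ∃ a, 3 * S < 10 * y a
  · obtain ⟨a, ha⟩ := hone
    have hrest := sum_mul_le_sum_mul_of_le (fun i _ => hy i) fun i (hi : i ∈ univ.erase a) =>
      hsmall (not_lt.1 fun hi' => htwo ⟨a, i, (ne_of_mem_erase hi).symm, ha, hi'⟩)
    rw [eq_sub_of_add_eq' (add_sum_erase _ y (mem_univ a))] at hrest
    rw [← add_sum_erase _ _ (mem_univ a)]
    have : y a ≤ S := single_le_sum (fun j _ => hy j) (mem_univ a)
    nlinarith [mul_nonneg (hy a) (sq_nonneg (159 * y a - 70 * S)),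
      mul_nonneg (sub_nonneg.2 this) (sq_nonneg (3 * y a - S)), mul_nonneg (hy a) (sq_nonneg S)]
  · have := sum_mul_le_sum_mul_of_le (fun i _ => hy i) fun i (_ : i ∈ univ) =>
      hsmall (not_lt.1 fun hi => hone ⟨i, hi⟩)
    nlinarith [pow_nonneg hS 3]

theorem MvPolynomial.IsHomogeneous.eval_smul {R σ : Type*} [CommSemiring R]
    {g : MvPolynomial σ R} {d : ℕ} (hg : g.IsHomogeneous d) (t : R) (x : σ → R) :
    eval (t • x) g = t ^ d * eval x g := by
  rw [eval_eq, eval_eq, mul_sum]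
  refine sum_congr rfl fun m hm => ?_
  simp only [Pi.smul_apply, smul_eq_mul, mul_pow, prod_mul_distrib, prod_pow_eq_pow_sum,
    ← hg.degree_eq_sum_deg_support hm]
  ring

theorem MvPolynomial.eval_eq_zero_of_eval_sum_sq_eq_zero {R σ ι : Type*} [CommRing R]
    [LinearOrder R] [IsStrictOrderedRing R] {s : Finset ι} {h : ι → MvPolynomial σ R}
    {x : σ → R} (hx : eval x (∑ i ∈ s, h i ^ 2) = 0) {i : ι} (hi : i ∈ s) :
    eval x (h i) = 0 := by
  simp only [map_sum, sq, map_mul] at hx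
  exact (sum_mul_self_eq_zero_iff s _).1 hx i hi

theorem Finset.sum_filter_eq_of_forall_sum_mul_pow_eq {R ι : Type*} [CommRing R] [IsDomain R]
    [Infinite R] {s : Finset ι} {c : ι → R} {k : ι → ℕ} {a : R} {N : ℕ}
    (h : ∀ t : R, ∑ i ∈ s, c i * t ^ k i = a * t ^ N) :
    ∑ i ∈ s with k i = N, c i = a := by
  have hP : ∑ i ∈ s, Polynomial.C (c i) * Polynomial.X ^ k i = Polynomial.C a * Polynomial.X ^ N :=
    Polynomial.funext fun t => by simpa [Polynomial.eval_finsetSum] using h t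
  simpa [Polynomial.finsetSum_coeff, Polynomial.coeff_C_mul, Polynomial.coeff_X_pow, sum_filter,
    eq_comm] using congrArg (Polynomial.coeff · N) hP

section

open Function

theorem Function.Injective.sum_comp_extend_zero {α β M N : Type*} [Fintype α] [Fintype β]
    [Zero M] [AddCommMonoid N] {ι : α → β} (hι : Injective ι) (z : α → M) {F : M → N}
    (hF : F 0 = 0) : ∑ b, F (extend ι z 0 b) = ∑ a, F (z a) :=
  (Fintype.sum_of_injective ι hι _ _ (fun b hb => by rw [extend_apply' _ _ _ hb, Pi.zero_apply, hF])
    fun a => by rw [hι.extend_apply]).symm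

theorem extend_zero_pow_three_eq_self {α β M : Type*} [MonoidWithZero M] {ι : α → β}
    {z : α → M} (hz : ∀ a, z a ^ 3 = z a) (b : β) : extend ι z 0 b ^ 3 = extend ι z 0 b := by
  rw [apply_extend (· ^ 3)]
  congr 1
  · exact funext hz
  · funext; simp

theorem MvPolynomial.isHomogeneous_extend_X_zero {R σ τ : Type*} [CommSemiring R] (ι : τ → σ)
    (l : σ) : (extend ι (X : τ → MvPolynomial τ R) 0 l).IsHomogeneous 1 := by
  classical
  rw [extend_def]
  split_ifs
  · exact isHomogeneous_X _ _
  · exact isHomogeneous_zero _ _ _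

theorem MvPolynomial.eval_bind₁_extend_X_zero {R σ τ : Type*} [CommSemiring R] (ι : τ → σ)
    (f : MvPolynomial σ R) (z : τ → R) :
    eval z (bind₁ (extend ι X 0) f) = eval (extend ι z 0) f := by
  change eval₂Hom _ z _ = _
  rw [eval₂Hom_bind₁]
  congr
  funext l
  rw [apply_extend (eval₂Hom (RingHom.id R) z)]
  congr 1
  funext i
  exact eval_X _

def IsSignedPairOrTriple {ι : Type*} [Fintype ι] (z : ι → ℝ) : Prop :=
  (∀ i, z i ^ 3 = z i) ∧ (∑ i, z i ^ 2 = 2 ∨ ∑ i, z i ^ 2 = 3)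

theorem IsSignedPairOrTriple.extend_zero {α β : Type*} [Fintype α] [Fintype β] {ι : α → β}
    (hι : Injective ι) {z : α → ℝ} (hz : IsSignedPairOrTriple z) :
    IsSignedPairOrTriple (extend ι z 0) := by
  have hsum : ∑ b, extend ι z 0 b ^ 2 = ∑ a, z a ^ 2 :=
    hι.sum_comp_extend_zero z (F := (· ^ 2)) (zero_pow two_ne_zero)
  exact ⟨extend_zero_pow_three_eq_self hz.1, hsum ▸ hz.2⟩

/- Only one of `±p` is listed, quartics being even. Summed over the listed signs, the odd
monomials of a quartic cancel and only `∑ aᵢ xᵢ⁴ + ∑ bᵢⱼ xᵢ² xⱼ²` is left, whose values are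
`aᵢ + aⱼ + bᵢⱼ` at `eᵢ ± eⱼ` and `aᵢ + aⱼ + aₖ + bᵢⱼ + bᵢₖ + bⱼₖ` at `eᵢ ± eⱼ ± eₖ`; the weights
eliminate everything but `12 a₀`. -/
def quadraturePoint : Fin 28 → Fin 4 → ℝ :=
  ![![1, 1, 0, 0], ![1, -1, 0, 0], ![1, 0, 1, 0], ![1, 0, -1, 0], ![1, 0, 0, 1], ![1, 0, 0, -1],
    ![0, 1, 1, 0], ![0, 1, -1, 0], ![0, 1, 0, 1], ![0, 1, 0, -1], ![0, 0, 1, 1], ![0, 0, 1, -1],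
    ![1, 1, 1, 0], ![1, 1, -1, 0], ![1, -1, 1, 0], ![1, -1, -1, 0], ![1, 1, 0, 1], ![1, 1, 0, -1],
    ![1, -1, 0, 1], ![1, -1, 0, -1], ![1, 0, 1, 1], ![1, 0, 1, -1], ![1, 0, -1, 1], ![1, 0, -1, -1],
    ![0, 1, 1, 1], ![0, 1, 1, -1], ![0, 1, -1, 1], ![0, 1, -1, -1]]

def quadratureWeight : Fin 28 → ℝ :=
  ![4, 4, 4, 4, 4, 4, -2, -2, -2, -2, -2, -2, -1, -1, -1, -1, -1, -1, -1, -1, -1, -1, -1, -1,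
    2, 2, 2, 2]

theorem isSignedPairOrTriple_quadraturePoint (k : Fin 28) :
    IsSignedPairOrTriple (quadraturePoint k) := by
  refine ⟨fun i => ?_, ?_⟩ <;> fin_cases k <;> try fin_cases i
  all_goals norm_num [quadraturePoint, Fin.sum_univ_succ]

theorem sum_quadratureWeight_mul_prod_pow (a : Fin 4 → ℕ) (ha : ∑ i, a i = 4) :
    ∑ k, quadratureWeight k * ∏ i, quadraturePoint k i ^ a i =
      12 * ∏ i, (Pi.single 0 1 : Fin 4 → ℝ) i ^ a i := by
  simp only [Fin.sum_univ_four] at ha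
  simp only [quadratureWeight, quadraturePoint, Matrix.cons_val', Matrix.cons_val_fin_one,
    Fin.prod_univ_four, Fin.isValue, Matrix.cons_val_zero, Matrix.cons_val_one, Matrix.cons_val,
    Fin.sum_univ_succ, one_pow, mul_one, one_mul, Matrix.cons_val_succ, neg_mul, univ_unique,
    Fin.default_eq_zero, sum_const, card_singleton, one_smul, Pi.single_eq_same, ne_eq,
    one_ne_zero, not_false_eq_true, Pi.single_eq_of_ne, Fin.reduceEq]
  generalize a 0 = a0, a 1 = a1, a 2 = a2, a 3 = a3 at ha ⊢
  have : a0 ≤ 4 := by omega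
  have : a1 ≤ 4 := by omega
  have : a2 ≤ 4 := by omega
  have : a3 ≤ 4 := by omega
  interval_cases a0 <;> interval_cases a1 <;> interval_cases a2 <;> interval_cases a3
  all_goals first | omega | norm_num

theorem MvPolynomial.sum_quadratureWeight_mul_eval {q : MvPolynomial (Fin 4) ℝ}
    (hq : q.IsHomogeneous 4) :
    ∑ k, quadratureWeight k * eval (quadraturePoint k) q = 12 * eval (Pi.single 0 1) q := by
  simp only [eval_eq', mul_sum]
  rw [sum_comm]
  refine sum_congr rfl fun m hm => ?_
  have hm4 : ∑ i, m i = 4 := by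
    rw [← Finsupp.degree_eq_sum, Finsupp.degree_eq_weight_one]; exact hq (mem_support_iff.1 hm)
  rw [mul_left_comm, ← sum_quadratureWeight_mul_prod_pow m hm4, mul_sum]
  exact sum_congr rfl fun k _ => by ring

theorem MvPolynomial.eval_single_eq_zero_of_isHomogeneous_four {q : MvPolynomial (Fin 4) ℝ}
    (hq : q.IsHomogeneous 4) (hZ : ∀ z, IsSignedPairOrTriple z → eval z q = 0) :
    eval (Pi.single 0 1) q = 0 := by
  have := sum_quadratureWeight_mul_eval hq
  rw [sum_eq_zero fun k _ => by rw [hZ _ (isSignedPairOrTriple_quadraturePoint k), mul_zero]]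
    at this
  linarith

theorem MvPolynomial.eval_extend_single_eq_zero_of_isHomogeneous_four {σ : Type*}
    {f : MvPolynomial σ ℝ} (hf : f.IsHomogeneous 4) (ι : Fin 4 → σ)
    (hZ : ∀ z, IsSignedPairOrTriple z → eval (extend ι z 0) f = 0) :
    eval (extend ι (Pi.single 0 1) 0) f = 0 := by
  have hq : (bind₁ (extend ι X 0) f).IsHomogeneous 4 := by
    simpa [← aeval_eq_bind₁] using hf.aeval _ (isHomogeneous_extend_X_zero ι)
  simpa only [eval_bind₁_extend_X_zero] using
    eval_single_eq_zero_of_isHomogeneous_four hq fun z hz => by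
      rw [eval_bind₁_extend_X_zero]; exact hZ z hz

end

noncomputable def T (n : ℕ) : MvPolynomial (Fin n) ℝ :=
  M n 2 * ((M n 2) ^ 3 - 5 * M n 2 * M n 4 + 6 * M n 6)

section T

variable {n : ℕ}

theorem eval_M (x : Fin n → ℝ) (r : ℕ) : eval x (M n r) = ∑ j, x j ^ r := by
  simp [M]

theorem eval_T (x : Fin n → ℝ) :
    eval x (T n) = (∑ j, x j ^ 2) *
      ∑ i, x i ^ 2 * ((∑ j, x j ^ 2 - 2 * x i ^ 2) * (∑ j, x j ^ 2 - 3 * x i ^ 2)) := by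
  set S := ∑ j, x j ^ 2
  have hexpand (i : Fin n) : x i ^ 2 * ((S - 2 * x i ^ 2) * (S - 3 * x i ^ 2)) =
      S ^ 2 * x i ^ 2 - 5 * S * x i ^ 4 + 6 * x i ^ 6 := by ring
  simp only [T, map_mul, map_add, map_sub, map_pow, map_ofNat, eval_M, hexpand, sum_add_distrib,
    sum_sub_distrib, ← mul_sum]
  ring

theorem T_nonneg (x : Fin n → ℝ) : 0 ≤ eval x (T n) := by
  rw [eval_T]
  exact mul_nonneg (sum_nonneg fun j _ => sq_nonneg _)
    (sum_mul_sub_mul_sub_nonneg (fun i => x i ^ 2) fun i => sq_nonneg _)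

theorem eval_T_smul (t : ℝ) (x : Fin n → ℝ) : eval (t • x) (T n) = t ^ 8 * eval x (T n) := by
  simp only [T, map_mul, map_add, map_sub, map_pow, map_ofNat, eval_M, Pi.smul_apply, smul_eq_mul,
    mul_pow, ← mul_sum]
  ring

theorem eval_T_of_pow_three_eq_self {x : Fin n → ℝ} (hx : ∀ j, x j ^ 3 = x j) :
    eval x (T n) = (∑ j, x j ^ 2) ^ 2 * (∑ j, x j ^ 2 - 2) * (∑ j, x j ^ 2 - 3) := by
  have h4 (j : Fin n) : x j ^ 4 = x j ^ 2 := by rw [pow_succ, hx, ← pow_two]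
  have h6 (j : Fin n) : x j ^ 6 = x j ^ 2 := by rw [show 6 = 3 + 3 from rfl, pow_add, hx, ← pow_two]
  simp only [T, map_mul, map_add, map_sub, map_pow, map_ofNat, eval_M, h4, h6]
  ring

theorem eval_T_eq_zero_of_isSignedPairOrTriple {x : Fin n → ℝ} (hx : IsSignedPairOrTriple x) :
    eval x (T n) = 0 := by
  rw [eval_T_of_pow_three_eq_self hx.1]
  rcases hx.2 with h | h <;> simp [h]

theorem eval_T_extend_single {m : ℕ} {ι : Fin m → Fin n} (hι : Function.Injective ι)
    (i : Fin m) : eval (Function.extend ι (Pi.single i 1) 0) (T n) = 2 := by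
  have hsingle (j : Fin m) : (Pi.single i 1 : Fin m → ℝ) j ^ 3 = (Pi.single i 1 : Fin m → ℝ) j := by
    rcases eq_or_ne j i with rfl | hj <;> simp [*]
  have hsum : ∑ j, Function.extend ι (Pi.single i 1 : Fin m → ℝ) 0 j ^ 2 = 1 := by
    rw [hι.sum_comp_extend_zero _ (F := (· ^ 2)) (zero_pow two_ne_zero)]
    simp [Pi.single_apply]
  rw [eval_T_of_pow_three_eq_self (extend_zero_pow_three_eq_self hsingle), hsum]
  norm_num

end T

theorem Tn_psd_not_sos (n : ℕ) (hn : 4 ≤ n) :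
    (∀ x : Fin n → ℝ,
        0 ≤ eval x (M n 2 * ((M n 2) ^ 3 - 5 * M n 2 * M n 4 + 6 * M n 6))) ∧
      ¬ IsSosForms (M n 2 * ((M n 2) ^ 3 - 5 * M n 2 * M n 4 + 6 * M n 6)) := by
  refine ⟨T_nonneg, ?_⟩
  rintro ⟨k, h, hhom, hsos⟩
  change T n = _ at hsos
  choose d hd using hhom
  set e : Fin n → ℝ := Function.extend (Fin.castLE hn) (Pi.single 0 1) 0
  have hvanish (i : Fin k) (hi : d i = 4) : eval e (h i) = 0 :=
    eval_extend_single_eq_zero_of_isHomogeneous_four (hi ▸ hd i) _ fun z hz =>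
      eval_eq_zero_of_eval_sum_sq_eq_zero (hsos ▸ eval_T_eq_zero_of_isSignedPairOrTriple
        (hz.extend_zero (Fin.castLE_injective hn))) (mem_univ i)
  have hray (t : ℝ) : ∑ i, eval e (h i) ^ 2 * t ^ (2 * d i) = 2 * t ^ 8 := by
    rw [← eval_T_extend_single (Fin.castLE_injective hn), mul_comm, ← eval_T_smul, hsos]
    simp only [map_sum, map_pow, (hd _).eval_smul]
    exact sum_congr rfl fun i _ => by ring
  have := sum_filter_eq_of_forall_sum_mul_pow_eq hray
  rw [sum_eq_zero fun i hi => by rw [hvanish i (by have := (mem_filter.1 hi).2; omega)]; ring] at this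
  norm_num at this
end
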